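/- arXiv:2001.01295 — 2 statements merged into one kernel-verified Lean document; each statement's English description precedes it below -/
import Mathlib

section
/- Define Li_1(x) = -log(1-x) and, for integers k ≥ 2, Li_k(x) = ∫₀^x Li_{k-1}(s)/s ds (for x ≤ 0 these integrals are well-defined). Set a_k = -Li_k(-1). Then for every integer d ≥ 2 and every real t ≥ 0, t^d/d! + Σ_{k=2}^d a_k t^{d-k}/(d-k)! ≤ -Li_d(-e^t) ≤ t^d/d! + (log 2) t^{d-1}/(d-1)! + Σ_{k=2}^d a_k t^{d-k}/(d-k)!. -/
open scoped Nat

/-- The polylogarithm, defined recursively by `Li 1 x = -log (1 - x)` and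
`Li (k+1) x = ∫ s in 0..x, Li k s / s`. -/
noncomputable def Li : ℕ → ℝ → ℝ
  | 0, _ => 0
  | 1, x => -Real.log (1 - x)
  | k + 2, x => ∫ s in (0:ℝ)..x, Li (k + 1) s / s

/-!
For `x ≤ 0` induction gives `x ≤ Li k x ≤ 0`, so the integrand `Li k s / s` lies in `[0, 1]`
and `Li (k + 2)` is differentiable on `(-∞, 0)` with derivative `Li (k + 1) x / x`. Hence
`H d t := -Li d (-exp t)` satisfies `H (d + 1) t = a (d + 1) + ∫₀ᵗ H d` (substitute `s = -eᵘ`),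
and the lower polynomial `P d` of the bounds satisfies the same recursion. So `H d - P d` arises
by repeated integration from `H 1 t - P 1 t = log (1 + e⁻ᵗ) ∈ [0, log 2]`, which gives
`0 ≤ H d - P d ≤ log 2 · t^(d-1)/(d-1)!`.
-/

open Set MeasureTheory Real

lemma integral_mem_Icc_of_mem_Icc_zero_one {g : ℝ → ℝ} {x : ℝ} (hx : x ≤ 0)
    (hg : ∀ s ∈ Icc x 0, g s ∈ Icc (0 : ℝ) 1) : ∫ s in (0 : ℝ)..x, g s ∈ Icc x 0 := by
  have h_nonneg : 0 ≤ ∫ s in x..0, g s :=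
    intervalIntegral.integral_nonneg hx fun s hs => (hg s hs).1
  have h_le : ‖∫ s in x..0, g s‖ ≤ 1 * |0 - x| :=
    intervalIntegral.norm_integral_le_of_norm_le_const fun s hs => by
      rw [uIoc_of_le hx] at hs
      have := hg s (Ioc_subset_Icc_self hs)
      rw [norm_of_nonneg this.1]
      exact this.2
  rw [norm_of_nonneg h_nonneg, one_mul, zero_sub, abs_neg, abs_of_nonpos hx] at h_le
  rw [intervalIntegral.integral_symm]
  exact ⟨by linarith, by linarith⟩

lemma div_mem_Icc_zero_one {a s : ℝ} (hs : s ≤ 0) (ha : a ∈ Icc s 0) :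
    a / s ∈ Icc (0 : ℝ) 1 := by
  rcases hs.lt_or_eq with hs | rfl
  · exact ⟨div_nonneg_of_nonpos ha.2 hs.le, (div_le_one_of_neg hs).2 ha.1⟩
  · simp

lemma Li_mem_Icc : ∀ (k : ℕ) {x : ℝ}, x ≤ 0 → Li k x ∈ Icc x 0
  | 0, _, hx => ⟨hx, le_rfl⟩
  | 1, x, hx => by
    have hlog : log (1 - x) ≤ -x := by
      linarith [log_le_sub_one_of_pos (x := 1 - x) (by linarith)]
    exact ⟨by simp only [Li]; linarith,
      by simpa [Li] using log_nonneg (by linarith : (1 : ℝ) ≤ 1 - x)⟩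
  | k + 2, x, hx => integral_mem_Icc_of_mem_Icc_zero_one hx fun s hs =>
      div_mem_Icc_zero_one hs.2 (Li_mem_Icc (k + 1) hs.2)

lemma intervalIntegrable_of_continuousOn_Ioo_of_norm_le {E : Type*} [NormedAddCommGroup E]
    {g : ℝ → E} {a b C : ℝ} (hab : a ≤ b) (hg : ContinuousOn g (Ioo a b))
    (hC : ∀ s ∈ Ioo a b, ‖g s‖ ≤ C) : IntervalIntegrable g volume a b := by
  rw [intervalIntegrable_iff_integrableOn_Ioo_of_le hab]
  exact .of_bound measure_Ioo_lt_top (hg.aestronglyMeasurable measurableSet_Ioo) C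
    ((ae_restrict_iff' measurableSet_Ioo).2 (ae_of_all _ hC))

lemma hasDerivAt_Li_add_two {k : ℕ} (hk : ContinuousOn (Li (k + 1)) (Iio 0)) {x : ℝ}
    (hx : x < 0) :
    HasDerivAt (Li (k + 2)) (Li (k + 1) x / x) x := by
  have hcont : ContinuousOn (fun s => Li (k + 1) s / s) (Iio 0) :=
    hk.div continuousOn_id fun s hs => hs.ne
  have hint : IntervalIntegrable (fun s => Li (k + 1) s / s) volume x 0 :=
    intervalIntegrable_of_continuousOn_Ioo_of_norm_le hx.le (hcont.mono fun s hs => hs.2)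
      fun s hs => by
        have := div_mem_Icc_zero_one hs.2.le (Li_mem_Icc (k + 1) hs.2.le)
        rw [norm_of_nonneg this.1]
        exact this.2
  exact intervalIntegral.integral_hasDerivAt_right hint.symm
    (hcont.stronglyMeasurableAtFilter isOpen_Iio x hx) (hcont.continuousAt (Iio_mem_nhds hx))

lemma continuousOn_Li : ∀ k : ℕ, ContinuousOn (Li k) (Iio 0)
  | 0 => continuousOn_const
  | 1 => by
    refine (continuousOn_log.comp (by fun_prop) fun s (hs : s < 0) => ?_).neg
    exact (by linarith : (0 : ℝ) < 1 - s).ne'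
  | k + 2 => fun _ hx =>
    (hasDerivAt_Li_add_two (continuousOn_Li (k + 1)) hx).continuousAt.continuousWithinAt

lemma continuous_Li_neg_exp (k : ℕ) : Continuous fun t => Li k (-exp t) :=
  (continuousOn_Li k).comp_continuous (by fun_prop) fun t => neg_lt_zero.2 (exp_pos t)

lemma Li_add_two_neg_exp (k : ℕ) (t : ℝ) :
    Li (k + 2) (-exp t) = Li (k + 2) (-1) + ∫ u in (0 : ℝ)..t, Li (k + 1) (-exp u) := by
  have hderiv : ∀ u ∈ uIcc 0 t,
      HasDerivAt (fun u => Li (k + 2) (-exp u)) (Li (k + 1) (-exp u)) u := by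
    intro u _
    have hneg : -exp u < 0 := neg_lt_zero.2 (exp_pos u)
    have := (hasDerivAt_Li_add_two (continuousOn_Li (k + 1)) hneg).comp u (hasDerivAt_exp u).neg
    rwa [div_mul_cancel₀ _ hneg.ne] at this
  rw [intervalIntegral.integral_eq_sub_of_hasDerivAt hderiv
    ((continuous_Li_neg_exp (k + 1)).intervalIntegrable _ _), exp_zero]
  ring

-- Appell polynomials in divided-power normalization: `(appellPoly a (d + 1))' = appellPoly a d`.
noncomputable def appellPoly (a : ℕ → ℝ) (d : ℕ) (t : ℝ) : ℝ :=
  t ^ d / (d ! : ℝ) + ∑ k ∈ Finset.Icc 2 d, a k * t ^ (d - k) / ((d - k)! : ℝ)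

lemma continuous_appellPoly (a : ℕ → ℝ) (d : ℕ) : Continuous (appellPoly a d) := by
  unfold appellPoly
  fun_prop

lemma integral_pow_div_factorial (n : ℕ) (t : ℝ) :
    ∫ u in (0 : ℝ)..t, u ^ n / (n ! : ℝ) = t ^ (n + 1) / ((n + 1)! : ℝ) := by
  rw [intervalIntegral.integral_div, integral_pow, Nat.factorial_succ]
  push_cast
  field_simp
  ring

lemma integral_appellPoly (a : ℕ → ℝ) {d : ℕ} (hd : 1 ≤ d) (t : ℝ) :
    ∫ u in (0 : ℝ)..t, appellPoly a d u = appellPoly a (d + 1) t - a (d + 1) := by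
  have hterm : ∀ k ∈ Finset.Icc 2 d, ∫ u in (0 : ℝ)..t, a k * u ^ (d - k) / ((d - k)! : ℝ)
      = a k * t ^ (d + 1 - k) / ((d + 1 - k)! : ℝ) := fun k hk => by
    have hk : d + 1 - k = d - k + 1 := by have := (Finset.mem_Icc.1 hk).2; omega
    simp only [mul_div_assoc, intervalIntegral.integral_const_mul, integral_pow_div_factorial, hk]
  unfold appellPoly
  rw [intervalIntegral.integral_add (Continuous.intervalIntegrable (by fun_prop) _ _)
      (Continuous.intervalIntegrable (by fun_prop) _ _),
    intervalIntegral.integral_finsetSum fun k _ => Continuous.intervalIntegrable (by fun_prop) _ _,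
    Finset.sum_congr rfl hterm, integral_pow_div_factorial, Finset.sum_Icc_succ_top (by omega),
    Nat.sub_self, pow_zero, Nat.factorial_zero, Nat.cast_one, mul_one, div_one]
  ring

lemma log_one_add_exp_sub_self_mem_Icc {t : ℝ} (ht : 0 ≤ t) :
    log (1 + exp t) - t ∈ Icc 0 (log 2) := by
  have hlower : t ≤ log (1 + exp t) := by
    simpa using log_le_log (exp_pos t) (by linarith : exp t ≤ 1 + exp t)
  have hupper : log (1 + exp t) ≤ log 2 + t := by
    have := log_le_log (by positivity) (by linarith [one_le_exp ht] : 1 + exp t ≤ 2 * exp t)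
    rwa [log_mul two_ne_zero (exp_pos t).ne', log_exp] at this
  exact ⟨by linarith, by linarith⟩

lemma neg_Li_neg_exp_sub_appellPoly_mem_Icc {d : ℕ} (hd : 1 ≤ d) {t : ℝ} (ht : 0 ≤ t) :
    -Li d (-exp t) - appellPoly (fun k => -Li k (-1)) d t
      ∈ Icc 0 (log 2 * t ^ (d - 1) / ((d - 1)! : ℝ)) := by
  induction d, hd using Nat.le_induction generalizing t with
  | base =>
    simpa [Li, appellPoly] using log_one_add_exp_sub_self_mem_Icc ht
  | succ d hd ih =>
    obtain ⟨m, rfl⟩ : ∃ m, d = m + 1 := ⟨d - 1, by omega⟩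
    set a : ℕ → ℝ := fun k => -Li k (-1)
    have hH : Continuous fun u => -Li (m + 1) (-exp u) := (continuous_Li_neg_exp _).neg
    have hdiff : -Li (m + 2) (-exp t) - appellPoly a (m + 2) t
        = ∫ u in (0 : ℝ)..t, (-Li (m + 1) (-exp u) - appellPoly a (m + 1) u) := by
      rw [intervalIntegral.integral_sub (hH.intervalIntegrable _ _)
          ((continuous_appellPoly _ _).intervalIntegrable _ _),
        intervalIntegral.integral_neg, integral_appellPoly a (by omega), Li_add_two_neg_exp]
      ring
    have hbound : ∫ u in (0 : ℝ)..t, log 2 * (u ^ m / (m ! : ℝ))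
        = log 2 * t ^ (m + 1) / ((m + 1)! : ℝ) := by
      rw [intervalIntegral.integral_const_mul, integral_pow_div_factorial, mul_div_assoc]
    simp only [Nat.add_sub_cancel] at ih ⊢
    rw [hdiff, ← hbound]
    refine ⟨intervalIntegral.integral_nonneg ht fun u hu => (ih hu.1).1,
      intervalIntegral.integral_mono_on ht
        ((hH.sub (continuous_appellPoly _ _)).intervalIntegrable _ _)
        (Continuous.intervalIntegrable (by fun_prop) _ _) fun u hu => ?_⟩
    rw [← mul_div_assoc]
    exact (ih hu.1).2

/-- For every integer `d ≥ 2` and real `t ≥ 0`,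
`t^d/d! + Σ_{k=2}^d a_k t^{d-k}/(d-k)! ≤ -Li_d(-e^t)
  ≤ t^d/d! + (log 2) t^{d-1}/(d-1)! + Σ_{k=2}^d a_k t^{d-k}/(d-k)!`,
where `a_k = -Li_k(-1)`. -/
theorem polylog_of_neg_exp_bounds (d : ℕ) (hd : 2 ≤ d) (t : ℝ) (ht : 0 ≤ t) :
    t ^ d / (d ! : ℝ)
        + ∑ k ∈ Finset.Icc 2 d, (-(Li k (-1))) * t ^ (d - k) / ((d - k)! : ℝ)
      ≤ -(Li d (-Real.exp t)) ∧
    -(Li d (-Real.exp t))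
      ≤ t ^ d / (d ! : ℝ) + Real.log 2 * t ^ (d - 1) / ((d - 1)! : ℝ)
        + ∑ k ∈ Finset.Icc 2 d, (-(Li k (-1))) * t ^ (d - k) / ((d - k)! : ℝ) := by
  have h := neg_Li_neg_exp_sub_appellPoly_mem_Icc (d := d) (by omega) ht
  simp only [appellPoly, mem_Icc] at h
  constructor <;> linarith [h.1, h.2]
end

section
/- Let Ω ⊂ ℝ² be an open bounded convex set and define the Hilbert distance d_Ω(a,b) = (1/2) log( (|a-p_b|/|b-p_b|)·(|b-p_a|/|a-p_a|) ) for distinct a, b ∈ Ω, where p_a, p_b are the intersection points of the line through a and b with ∂Ω (p_a on the a-side, p_b on the b-side), and d_Ω(a,a) = 0. Then d_Ω is a metric on Ω: it is symmetric, nonnegative, vanishes exactly on the diagonal, and satisfies the triangle inequality. -/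
/-!
Fix `a ∈ Ω`. The gauge of the translate `Ω - a`, evaluated at `b - a`, is the ratio
`t(a, b) = |b - a| / |p_b - a|`, so `|a - p_b| / |b - p_b| = 1 / (1 - t(a, b))` and `d_Ω` is the
symmetrisation of the Funk distance `F(a, b) = -log (1 - t(a, b))`. Writing `b - a = p (e - a)` and
`c - b = q (e' - b)` with `e, e' ∈ closure Ω`, `p = t(a, b)`, `q = t(b, c)`, one has
`c - a = p (1 - q) (e - a) + q (e' - a)`, so subadditivity of the gauge gives
`(1 - t(a, b)) (1 - t(b, c)) ≤ 1 - t(a, c)`: the triangle inequality for `F`, hence for `d_Ω`.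
-/

open Set Metric Bornology Real

variable {E : Type*} [NormedAddCommGroup E] {Ω : Set E} {a b c : E}

lemma preimage_add_left_mem_nhds_zero (hopen : IsOpen Ω) (ha : a ∈ Ω) :
    (a + ·) ⁻¹' Ω ∈ nhds (0 : E) :=
  (hopen.preimage (continuous_const_add a)).mem_nhds (by simpa using ha)

variable [NormedSpace ℝ E]

noncomputable def funkGauge (Ω : Set E) (a b : E) : ℝ := gauge ((a + ·) ⁻¹' Ω) (b - a)

noncomputable def funkDist (Ω : Set E) (a b : E) : ℝ := -log (1 - funkGauge Ω a b)

noncomputable def hilbertDist (Ω : Set E) (a b : E) : ℝ := (funkDist Ω a b + funkDist Ω b a) / 2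

lemma funkGauge_nonneg : 0 ≤ funkGauge Ω a b := gauge_nonneg _

lemma funkGauge_self : funkGauge Ω a a = 0 := by simp [funkGauge]

lemma funkGauge_lt_one (hopen : IsOpen Ω) (hb : b ∈ Ω) : funkGauge Ω a b < 1 :=
  gauge_lt_one_of_mem_of_isOpen (hopen.preimage (continuous_const_add a)) (by simpa using hb)

lemma funkGauge_pos (hopen : IsOpen Ω) (hbdd : IsBounded Ω) (ha : a ∈ Ω) (hab : a ≠ b) :
    0 < funkGauge Ω a b :=
  (gauge_pos (absorbent_nhds_zero (preimage_add_left_mem_nhds_zero hopen ha))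
    ((NormedSpace.isVonNBounded_iff ℝ).2
      ((IsometryEquiv.addLeft a).isometry.antilipschitz.isBounded_preimage hbdd))).2
    (sub_ne_zero.2 hab.symm)

lemma funkGauge_le_one_iff_mem_closure (hopen : IsOpen Ω) (hconv : Convex ℝ Ω) (ha : a ∈ Ω) :
    funkGauge Ω a b ≤ 1 ↔ b ∈ closure Ω := by
  rw [funkGauge, gauge_le_one_iff_mem_closure (hconv.translate_preimage_right a)
    (preimage_add_left_mem_nhds_zero hopen ha),
    show (a + ·) ⁻¹' Ω = Homeomorph.addLeft a ⁻¹' Ω from rfl, ← Homeomorph.preimage_closure]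
  simp

lemma funkGauge_eq_one_iff_mem_frontier (hopen : IsOpen Ω) (hconv : Convex ℝ Ω) (ha : a ∈ Ω) :
    funkGauge Ω a b = 1 ↔ b ∈ frontier Ω := by
  rw [funkGauge, gauge_eq_one_iff_mem_frontier (hconv.translate_preimage_right a)
    (preimage_add_left_mem_nhds_zero hopen ha),
    show (a + ·) ⁻¹' Ω = Homeomorph.addLeft a ⁻¹' Ω from rfl, ← Homeomorph.preimage_frontier]
  simp

lemma funkGauge_add_smul {r : ℝ} (hr : 0 ≤ r) :
    funkGauge Ω a (a + r • (b - a)) = r * funkGauge Ω a b := by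
  rw [funkGauge, funkGauge, add_sub_cancel_left, gauge_smul_of_nonneg hr, smul_eq_mul]

lemma add_inv_funkGauge_smul_mem_frontier (hopen : IsOpen Ω) (hconv : Convex ℝ Ω) (ha : a ∈ Ω)
    (ht : 0 < funkGauge Ω a b) : a + (funkGauge Ω a b)⁻¹ • (b - a) ∈ frontier Ω := by
  rw [← funkGauge_eq_one_iff_mem_frontier hopen hconv ha, funkGauge_add_smul (inv_nonneg.2 ht.le),
    inv_mul_cancel₀ ht.ne']

lemma exists_mem_closure_sub_eq_funkGauge_smul (hopen : IsOpen Ω) (hbdd : IsBounded Ω)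
    (hconv : Convex ℝ Ω) (ha : a ∈ Ω) :
    ∃ e ∈ closure Ω, b - a = funkGauge Ω a b • (e - a) := by
  rcases eq_or_ne a b with rfl | hab
  · exact ⟨a, subset_closure ha, by simp⟩
  · have ht := funkGauge_pos hopen hbdd ha hab
    refine ⟨_, frontier_subset_closure (add_inv_funkGauge_smul_mem_frontier hopen hconv ha ht), ?_⟩
    rw [add_sub_cancel_left, smul_inv_smul₀ ht.ne']

lemma one_sub_funkGauge_mul_le (hopen : IsOpen Ω) (hbdd : IsBounded Ω) (hconv : Convex ℝ Ω)
    (ha : a ∈ Ω) (hb : b ∈ Ω) (hc : c ∈ Ω) :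
    (1 - funkGauge Ω a b) * (1 - funkGauge Ω b c) ≤ 1 - funkGauge Ω a c := by
  set p := funkGauge Ω a b
  set q := funkGauge Ω b c
  obtain ⟨e, he, hbe⟩ := exists_mem_closure_sub_eq_funkGauge_smul (b := b) hopen hbdd hconv ha
  obtain ⟨e', he', hce'⟩ := exists_mem_closure_sub_eq_funkGauge_smul (b := c) hopen hbdd hconv hb
  have hp : 0 ≤ p := funkGauge_nonneg
  have hq : 0 ≤ q := funkGauge_nonneg
  have hq1 : q < 1 := funkGauge_lt_one hopen hc
  have hsplit : c - a = (p * (1 - q)) • (e - a) + q • (e' - a) := by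
    linear_combination (norm := module) hce' + (1 - q) • hbe
  have hK := hconv.translate_preimage_right a
  have habs := absorbent_nhds_zero (𝕜 := ℝ) (preimage_add_left_mem_nhds_zero hopen ha)
  have hge : gauge ((a + ·) ⁻¹' Ω) (c - a) ≤ p * (1 - q) * 1 + q * 1 := by
    rw [hsplit]
    refine (gauge_add_le hK habs _ _).trans ?_
    rw [gauge_smul_of_nonneg (mul_nonneg hp (by linarith)), gauge_smul_of_nonneg hq, smul_eq_mul,
      smul_eq_mul]
    gcongr
    · exact (funkGauge_le_one_iff_mem_closure hopen hconv ha).2 he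
    · exact (funkGauge_le_one_iff_mem_closure hopen hconv ha).2 he'
  change funkGauge Ω a c ≤ _ at hge
  linarith

lemma funkDist_self : funkDist Ω a a = 0 := by simp [funkDist, funkGauge_self]

lemma funkDist_nonneg (hopen : IsOpen Ω) (hb : b ∈ Ω) : 0 ≤ funkDist Ω a b :=
  neg_nonneg.2 (log_nonpos (by linarith [funkGauge_lt_one (a := a) hopen hb])
    (by linarith [funkGauge_nonneg (Ω := Ω) (a := a) (b := b)]))

lemma funkDist_pos (hopen : IsOpen Ω) (hbdd : IsBounded Ω) (ha : a ∈ Ω) (hb : b ∈ Ω)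
    (hab : a ≠ b) : 0 < funkDist Ω a b :=
  neg_pos.2 (log_neg (by linarith [funkGauge_lt_one (a := a) hopen hb])
    (by linarith [funkGauge_pos hopen hbdd ha hab]))

lemma funkDist_triangle (hopen : IsOpen Ω) (hbdd : IsBounded Ω) (hconv : Convex ℝ Ω)
    (ha : a ∈ Ω) (hb : b ∈ Ω) (hc : c ∈ Ω) :
    funkDist Ω a c ≤ funkDist Ω a b + funkDist Ω b c := by
  have hab : 0 < 1 - funkGauge Ω a b := by linarith [funkGauge_lt_one (a := a) hopen hb]
  have hbc : 0 < 1 - funkGauge Ω b c := by linarith [funkGauge_lt_one (a := b) hopen hc]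
  have hlog := log_le_log (mul_pos hab hbc) (one_sub_funkGauge_mul_le hopen hbdd hconv ha hb hc)
  rw [log_mul hab.ne' hbc.ne'] at hlog
  simp only [funkDist]
  linarith

lemma hilbertDist_comm : hilbertDist Ω a b = hilbertDist Ω b a := by
  rw [hilbertDist, hilbertDist, add_comm]

lemma hilbertDist_self : hilbertDist Ω a a = 0 := by simp [hilbertDist, funkDist_self]

lemma hilbertDist_nonneg (hopen : IsOpen Ω) (ha : a ∈ Ω) (hb : b ∈ Ω) : 0 ≤ hilbertDist Ω a b :=
  div_nonneg (add_nonneg (funkDist_nonneg hopen hb) (funkDist_nonneg hopen ha)) zero_le_two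

lemma hilbertDist_pos (hopen : IsOpen Ω) (hbdd : IsBounded Ω) (ha : a ∈ Ω) (hb : b ∈ Ω)
    (hab : a ≠ b) : 0 < hilbertDist Ω a b :=
  div_pos (add_pos_of_pos_of_nonneg (funkDist_pos hopen hbdd ha hb hab)
    (funkDist_nonneg hopen ha)) zero_lt_two

lemma hilbertDist_eq_zero_iff (hopen : IsOpen Ω) (hbdd : IsBounded Ω) (ha : a ∈ Ω) (hb : b ∈ Ω) :
    hilbertDist Ω a b = 0 ↔ a = b :=
  ⟨fun h ↦ by_contra fun hab ↦ (hilbertDist_pos hopen hbdd ha hb hab).ne' h,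
    fun h ↦ h ▸ hilbertDist_self⟩

lemma hilbertDist_triangle (hopen : IsOpen Ω) (hbdd : IsBounded Ω) (hconv : Convex ℝ Ω)
    (ha : a ∈ Ω) (hb : b ∈ Ω) (hc : c ∈ Ω) :
    hilbertDist Ω a c ≤ hilbertDist Ω a b + hilbertDist Ω b c := by
  have := funkDist_triangle hopen hbdd hconv ha hb hc
  have := funkDist_triangle hopen hbdd hconv hc hb ha
  simp only [hilbertDist]
  linarith

lemma dist_div_dist_add_inv_smul {t : ℝ} (ht₀ : 0 < t) (ht₁ : t < 1) (hab : a ≠ b) :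
    dist a (a + t⁻¹ • (b - a)) / dist b (a + t⁻¹ • (b - a)) = (1 - t)⁻¹ := by
  have hba : 0 < ‖b - a‖ := norm_pos_iff.2 (sub_ne_zero.2 hab.symm)
  have h₁ : 1 < t⁻¹ := (one_lt_inv₀ ht₀).2 ht₁
  rw [dist_eq_norm, dist_eq_norm, show a - (a + t⁻¹ • (b - a)) = (-t⁻¹) • (b - a) by module,
    show b - (a + t⁻¹ • (b - a)) = (1 - t⁻¹) • (b - a) by module, norm_smul, norm_smul,
    Real.norm_eq_abs, Real.norm_eq_abs, abs_neg, abs_of_pos (inv_pos.2 ht₀),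
    abs_of_neg (by linarith), mul_div_mul_right _ _ hba.ne']
  have : 1 - t ≠ 0 := by linarith
  field_simp
  rw [← neg_sub 1 t, div_neg, neg_neg, div_self this]

lemma hilbertDist_eq_half_log_cross_ratio (hopen : IsOpen Ω) (hbdd : IsBounded Ω)
    (ha : a ∈ Ω) (hb : b ∈ Ω) (hab : a ≠ b) :
    let pa := b + (funkGauge Ω b a)⁻¹ • (a - b)
    let pb := a + (funkGauge Ω a b)⁻¹ • (b - a)
    hilbertDist Ω a b = (1 / 2) * log ((dist a pb / dist b pb) * (dist b pa / dist a pa)) := by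
  have hab₀ := funkGauge_pos hopen hbdd ha hab
  have hba₀ := funkGauge_pos hopen hbdd hb hab.symm
  have hab₁ := funkGauge_lt_one (a := a) hopen hb
  have hba₁ := funkGauge_lt_one (a := b) hopen ha
  simp only
  rw [dist_div_dist_add_inv_smul hab₀ hab₁ hab, dist_div_dist_add_inv_smul hba₀ hba₁ hab.symm,
    log_mul (by simp; linarith) (by simp; linarith), log_inv, log_inv, hilbertDist, funkDist,
    funkDist]
  ring

/-- The Hilbert distance on an open bounded convex set `Ω ⊂ ℝ²` is a metric:
symmetric, nonnegative, vanishing exactly on the diagonal, and satisfying the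
triangle inequality. Here `d` is any function satisfying the defining formula
`d(a,b) = (1/2) log((|a-p_b|/|b-p_b|)·(|b-p_a|/|a-p_a|))` for distinct `a, b ∈ Ω`,
where `p_a, p_b` are the intersection points of the line `ab` with `∂Ω`
(`p_a` on the `a`-side, `p_b` on the `b`-side), and `d(a,a) = 0`. -/
theorem hilbert_distance_is_metric
    (Ω : Set (EuclideanSpace ℝ (Fin 2)))
    (hopen : IsOpen Ω) (hbdd : Bornology.IsBounded Ω) (hconv : Convex ℝ Ω)
    (d : EuclideanSpace ℝ (Fin 2) → EuclideanSpace ℝ (Fin 2) → ℝ)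
    (hdiag : ∀ a ∈ Ω, d a a = 0)
    (hformula : ∀ a ∈ Ω, ∀ b ∈ Ω, a ≠ b →
      ∀ pa pb : EuclideanSpace ℝ (Fin 2),
        pa ∈ frontier Ω → pb ∈ frontier Ω →
        (∃ s : ℝ, s < 0 ∧ pa = a + s • (b - a)) →
        (∃ s : ℝ, 1 < s ∧ pb = a + s • (b - a)) →
        d a b = (1 / 2) * Real.log ((dist a pb / dist b pb) * (dist b pa / dist a pa))) :
    (∀ a ∈ Ω, ∀ b ∈ Ω, d a b = d b a) ∧
    (∀ a ∈ Ω, ∀ b ∈ Ω, 0 ≤ d a b) ∧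
    (∀ a ∈ Ω, ∀ b ∈ Ω, (d a b = 0 ↔ a = b)) ∧
    (∀ a ∈ Ω, ∀ b ∈ Ω, ∀ c ∈ Ω, d a c ≤ d a b + d b c) := by
  have hd : ∀ a ∈ Ω, ∀ b ∈ Ω, d a b = hilbertDist Ω a b := by
    intro a ha b hb
    rcases eq_or_ne a b with rfl | hab
    · rw [hdiag a ha, hilbertDist_self]
    have hab₀ := funkGauge_pos hopen hbdd ha hab
    have hba₀ := funkGauge_pos hopen hbdd hb hab.symm
    have hab₁ := funkGauge_lt_one (a := a) hopen hb
    have hba₁ := funkGauge_lt_one (a := b) hopen ha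
    rw [hilbertDist_eq_half_log_cross_ratio hopen hbdd ha hb hab]
    refine hformula a ha b hb hab _ _ (add_inv_funkGauge_smul_mem_frontier hopen hconv hb hba₀)
      (add_inv_funkGauge_smul_mem_frontier hopen hconv ha hab₀)
      ⟨1 - (funkGauge Ω b a)⁻¹, by linarith [(one_lt_inv₀ hba₀).2 hba₁], by module⟩
      ⟨(funkGauge Ω a b)⁻¹, (one_lt_inv₀ hab₀).2 hab₁, rfl⟩
  refine ⟨fun a ha b hb ↦ ?_, fun a ha b hb ↦ ?_, fun a ha b hb ↦ ?_, fun a ha b hb c hc ↦ ?_⟩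
  · rw [hd a ha b hb, hd b hb a ha, hilbertDist_comm]
  · exact hd a ha b hb ▸ hilbertDist_nonneg hopen ha hb
  · rw [hd a ha b hb, hilbertDist_eq_zero_iff hopen hbdd ha hb]
  · rw [hd a ha c hc, hd a ha b hb, hd b hb c hc]
    exact hilbertDist_triangle hopen hbdd hconv ha hb hc
end
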